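/- arXiv:2411.12416 — 3 statements merged into one kernel-verified Lean document; each statement's English description precedes it below -/
import Mathlib

section
/- Let τ_h : [0,1] → ℝ₊ be weakly increasing and C¹ for h = 1,...,N, let Γ be an N×n 0/1 matrix, and define T(θ) = Γᵀ τ(Γθ) componentwise. Fix j ∈ {1,...,n} and θ ∈ S^n. Then the map Υ_j : [0,1] → ℝ₊ defined by Υ_j(σ) = T_j(σ e_j + (1−σ)θ) is weakly increasing (non-decreasing). -/
open Matrix BigOperators

theorem stmt_8 (N n : ℕ) (Γ : Matrix (Fin N) (Fin n) ℝ)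
    (hΓ01 : ∀ h i, Γ h i = 0 ∨ Γ h i = 1)
    (τ : Fin N → ℝ → ℝ)
    (hτmono : ∀ h, Monotone (τ h)) (hτpos : ∀ h x, 0 ≤ τ h x)
    (hτC1 : ∀ h, ContDiff ℝ 1 (τ h))
    (j : Fin n) (θ : Fin n → ℝ)
    (hθ : (∀ k, 0 ≤ θ k) ∧ ∑ k, θ k = 1) :
    MonotoneOn (fun σ : ℝ =>
        ∑ h, Γ h j * τ h ((Γ *ᵥ (fun k => σ * (if k = j then 1 else 0) + (1 - σ) * θ k)) h))
      (Set.Icc (0:ℝ) 1) := by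
  intro a ha b hb hab
  apply Finset.sum_le_sum
  intro h _
  rcases hΓ01 h j with h0 | h1
  · simp [h0]
  · rw [h1, one_mul, one_mul]
    apply hτmono
    have key : ∀ σ : ℝ, (Γ *ᵥ (fun k => σ * (if k = j then 1 else 0) + (1 - σ) * θ k)) h
        = σ + (1 - σ) * ∑ k, Γ h k * θ k := by
      intro σ
      simp only [mulVec, dotProduct]
      have e : ∀ k : Fin n, Γ h k * (σ * (if k = j then 1 else 0) + (1 - σ) * θ k)
          = (if k = j then σ * Γ h k else 0) + (1 - σ) * (Γ h k * θ k) := by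
        intro k; by_cases hk : k = j <;> simp [hk] <;> ring
      rw [Finset.sum_congr rfl (fun k _ => e k), Finset.sum_add_distrib,
        Finset.sum_ite_eq' Finset.univ j, ← Finset.mul_sum]
      simp [h1]
    rw [key a, key b]
    have hA : ∑ k, Γ h k * θ k ≤ 1 := by
      rw [← hθ.2]
      apply Finset.sum_le_sum
      intro k _
      rcases hΓ01 h k with h0 | h0 <;> simp [h0, hθ.1 k]
    nlinarith [hab, hA]
end

section
/- (Nash equilibrium with delay parameter.) With route travel times T̂₁(θ) = 2 + 2θ̂₁ + θ̌₁, T̂₂(θ) = 3 + θ̂₂ + Δ, Ť₁(θ) = 2 + θ̂₁ + 2θ̌₁, Ť₂(θ) = 3 + θ̌₂, constraints θ̂₁+θ̂₂ = 1, θ̌₁+θ̌₂ = 1, and Δ ∈ [0, 4/3], the point θ_Δ = ((1/2 + 3Δ/8, 1/2 − 3Δ/8), (1/2 − Δ/8, 1/2 + Δ/8)) lies in S²×S², and satisfies T̂₁(θ_Δ) = T̂₂(θ_Δ) = 7/2 + 5Δ/8 and Ť₁(θ_Δ) = Ť₂(θ_Δ) = 7/2 + Δ/8; in particular it is a Nash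 equilibrium and both populations' equilibrium travel times strictly increase with Δ for Δ > 0. -/
/-- Nash condition for a population split `(a,b)` over two routes with travel
times `T1`, `T2`. -/
def nash2 (a b T1 T2 : ℝ) : Prop :=
  (a ≠ 0 → b ≠ 0 → T1 = T2) ∧
  (a = 0 → a * T1 + b * T2 ≤ T1) ∧
  (b = 0 → a * T1 + b * T2 ≤ T2)

theorem stmt_16 (Δ : ℝ) (hΔ : Δ ∈ Set.Icc (0:ℝ) (4/3)) :
    -- the point θ_Δ lies in S² × S²
    (0 ≤ 1/2 + 3*Δ/8 ∧ 0 ≤ 1/2 - 3*Δ/8 ∧ (1/2 + 3*Δ/8) + (1/2 - 3*Δ/8) = 1 ∧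
     0 ≤ 1/2 - Δ/8 ∧ 0 ≤ 1/2 + Δ/8 ∧ (1/2 - Δ/8) + (1/2 + Δ/8) = 1) ∧
    -- the route travel times at θ_Δ
    (2 + 2 * (1/2 + 3*Δ/8) + (1/2 - Δ/8) = 7/2 + 5*Δ/8 ∧
     3 + (1/2 - 3*Δ/8) + Δ = 7/2 + 5*Δ/8 ∧
     2 + (1/2 + 3*Δ/8) + 2 * (1/2 - Δ/8) = 7/2 + Δ/8 ∧
     3 + (1/2 + Δ/8) = 7/2 + Δ/8) ∧
    -- θ_Δ is a Nash equilibrium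
    nash2 (1/2 + 3*Δ/8) (1/2 - 3*Δ/8)
      (2 + 2 * (1/2 + 3*Δ/8) + (1/2 - Δ/8)) (3 + (1/2 - 3*Δ/8) + Δ) ∧
    nash2 (1/2 - Δ/8) (1/2 + Δ/8)
      (2 + (1/2 + 3*Δ/8) + 2 * (1/2 - Δ/8)) (3 + (1/2 + Δ/8)) ∧
    -- both equilibrium travel times strictly increase with Δ
    StrictMonoOn (fun t : ℝ => 7/2 + 5*t/8) (Set.Icc (0:ℝ) (4/3)) ∧
    StrictMonoOn (fun t : ℝ => 7/2 + t/8) (Set.Icc (0:ℝ) (4/3)) := by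
  obtain ⟨h0, h1⟩ := hΔ
  refine ⟨⟨by linarith, by linarith, by ring, by linarith, by linarith, by ring⟩,
    ⟨by ring, by ring, by ring, by ring⟩,
    ⟨fun _ _ => by ring, fun h => by nlinarith, fun h => by nlinarith⟩,
    ⟨fun _ _ => by ring, fun h => by nlinarith, fun h => by nlinarith⟩,
    fun a _ b _ hab => by simpa using by linarith,
    fun a _ b _ hab => by simpa using by linarith⟩
end

section
/- (Braess paradox with two heterogeneous populations.) In the four-road Braess network, route travel times before the shortcut are T̂₁(θ) = 45 + 40θ̂₁, T̂₂(θ) = 45 + 40θ̂₂, Ť₁(θ) = 30 + 20θ̌₁ + 8θ̂₁, Ť₂(θ) = 30 + 20θ̌₂ + 8θ̂₂ with θ̂₁+θ̂₂ = θ̌₁+θ̌₂ = 1; the unique Nash equilibrium is θ* = ((1/2,1/2),(1/2,1/2)) with travel times T̂ = 65 and Ť = 44. After adding the shortcut route, the travel times become T̂₁ = 45 + 40(θ̂₁+θ̂₃), T̂₂ = 45 + 40(θ̂₂+θ̂₃), T̂₃ = 40(θ̂₁+θ̂₃)+40(θ̂₂+θ̂₃) and analogously for Ť with coefficients (20, 8);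 then θ** = ((0,0,1),(0,0,1)) is a Nash equilibrium with travel times T̂₃(θ**) = 80 > 65 and Ť₃(θ**) = 56 > 44: every driver of both populations is worse off. -/
/-- Nash condition for a population split `(a,b,c)` over three routes. -/
def nash3 (a b c T1 T2 T3 : ℝ) : Prop :=
  (a ≠ 0 → b ≠ 0 → T1 = T2) ∧ (a ≠ 0 → c ≠ 0 → T1 = T3) ∧
  (b ≠ 0 → c ≠ 0 → T2 = T3) ∧
  (a = 0 → a * T1 + b * T2 + c * T3 ≤ T1) ∧
  (b = 0 → a * T1 + b * T2 + c * T3 ≤ T2) ∧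
  (c = 0 → a * T1 + b * T2 + c * T3 ≤ T3)

theorem stmt_17 :
    -- Before the shortcut: the unique Nash equilibrium is ((1/2,1/2),(1/2,1/2))
    (∀ a b c d : ℝ, 0 ≤ a → 0 ≤ b → 0 ≤ c → 0 ≤ d →
      a + b = 1 → c + d = 1 →
      nash2 a b (45 + 40*a) (45 + 40*b) →
      nash2 c d (30 + 20*c + 8*a) (30 + 20*d + 8*b) →
      a = 1/2 ∧ b = 1/2 ∧ c = 1/2 ∧ d = 1/2) ∧
    -- its travel times are 65 and 44
    (45 + 40 * (1/2 : ℝ) = 65 ∧ 30 + 20 * (1/2 : ℝ) + 8 * (1/2) = 44) ∧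
    -- After the shortcut: ((0,0,1),(0,0,1)) is a Nash equilibrium
    (nash3 (0:ℝ) 0 1
      (45 + 40*(0 + 1)) (45 + 40*(0 + 1)) (40*(0 + 1) + 40*(0 + 1)) ∧
     nash3 (0:ℝ) 0 1
      (30 + 20*(0 + 1) + 8*(0 + 1)) (30 + 20*(0 + 1) + 8*(0 + 1))
      (20*(0 + 1) + 8*(0 + 1) + (20*(0 + 1) + 8*(0 + 1)))) ∧
    -- with travel times 80 > 65 and 56 > 44: everyone is worse off
    (40*((0:ℝ) + 1) + 40*(0 + 1) = 80 ∧
     20*((0:ℝ) + 1) + 8*(0 + 1) + (20*(0 + 1) + 8*(0 + 1)) = 56 ∧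
     (65:ℝ) < 80 ∧ (44:ℝ) < 56) := by
  refine ⟨?_, by norm_num, ⟨?_, ?_⟩, by norm_num⟩
  · intro a b c d ha hb hc hd hab hcd h1 h2
    obtain ⟨e1, z1, z2⟩ := h1
    obtain ⟨e1', z1', z2'⟩ := h2
    have hA : a = 1/2 ∧ b = 1/2 := by
      rcases eq_or_ne a 0 with h | h
      · exfalso
        have hb1 : b = 1 := by linarith
        have := z1 h
        rw [h, hb1] at this
        linarith
      · rcases eq_or_ne b 0 with h' | h'
        · exfalso
          have ha1 : a = 1 := by linarith
          have := z2 h'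
          rw [h', ha1] at this
          linarith
        · have := e1 h h'
          constructor <;> linarith
    obtain ⟨ha2, hb2⟩ := hA
    refine ⟨ha2, hb2, ?_⟩
    rcases eq_or_ne c 0 with h | h
    · exfalso
      have hd1 : d = 1 := by linarith
      have := z1' h
      rw [h, hd1, ha2, hb2] at this
      linarith
    · rcases eq_or_ne d 0 with h' | h'
      · exfalso
        have hc1 : c = 1 := by linarith
        have := z2' h'
        rw [h', hc1, ha2, hb2] at this
        linarith
      · have := e1' h h'
        constructor <;> linarith
  · unfold nash3; norm_num
  · unfold nash3; norm_num
end
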